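/- arXiv:1610.09271 — 2 statements merged into one kernel-verified Lean document; each statement's English description precedes it below -/
import Mathlib

section
/- Let n ≥ 3 and let the type Bₙ Cartan pairing be given by ⟨α_i^∨, α_j⟩ = a_{ij} where a_{ii} = 2, a_{i,i+1} = a_{i+1,i} = -1 for 1 ≤ i ≤ n-2, a_{n-1,n} = -1, a_{n,n-1} = -2, and a_{ij} = 0 for |i-j| ≥ 2. Define ρ•^∨ = Σ_{i=2}^{n-1} ((2n-i)(i-1)/2)·α_i^∨ + (n(n-1)/4)·α_n^∨ (a ℚ-linear combination). Then ⟨ρ•^∨, α_j⟩ = 1 for every j with 2 ≤ j ≤ n, and ⟨2ρ•^∨, α₁⟩ = -(2n - 2). -/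
open scoped BigOperators

/-- The type `Bₙ` Cartan pairing `⟨α_i^∨, α_j⟩` on indices `1, …, n`
(with `α_n` the short root). -/
def cartanB (n i j : ℕ) : ℤ :=
  if i = j then 2
  else if i = n ∧ j = n - 1 then -2
  else if i + 1 = j ∨ j + 1 = i then -1
  else 0

/-- The pairing of `ρ•^∨ = Σ_{i=2}^{n-1} ((2n-i)(i-1)/2)·α_i^∨ + (n(n-1)/4)·α_n^∨`
with the simple root `α_j`, computed over `ℚ`. -/
noncomputable def rhoBulletPairing (n j : ℕ) : ℚ :=
  (∑ i ∈ Finset.Icc 2 (n - 1),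
      ((2 * (n : ℚ) - (i : ℚ)) * ((i : ℚ) - 1) / 2) * (cartanB n i j : ℚ)) +
    ((n : ℚ) * ((n : ℚ) - 1) / 4) * (cartanB n n j : ℚ)

lemma key (n j : ℕ) (hn : 3 ≤ n) (F : ℕ → ℚ) :
    ∑ i ∈ Finset.Icc 2 (n - 1), F i * (cartanB n i j : ℚ)
      = (if j ∈ Finset.Icc 2 (n - 1) then 2 * F j else 0)
        + (if j + 1 ∈ Finset.Icc 2 (n - 1) then -F (j + 1) else 0)
        + (if j - 1 ∈ Finset.Icc 2 (n - 1) then -F (j - 1) else 0) := by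
  have h : ∀ i ∈ Finset.Icc 2 (n - 1), F i * (cartanB n i j : ℚ)
      = (if i = j then 2 * F i else 0) + (if i = j + 1 then -F i else 0)
        + (if i = j - 1 then -F i else 0) := by
    intro i hi
    simp only [Finset.mem_Icc] at hi
    unfold cartanB
    split_ifs
    all_goals push_cast
    all_goals try ring
    all_goals exfalso
    all_goals omega
  rw [Finset.sum_congr rfl h, Finset.sum_add_distrib, Finset.sum_add_distrib,
    Finset.sum_ite_eq' _ j, Finset.sum_ite_eq' _ (j+1), Finset.sum_ite_eq' _ (j-1)]

/-- Type BII computation: `⟨ρ•^∨, α_j⟩ = 1` for all black nodes `2 ≤ j ≤ n`, and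
`⟨2ρ•^∨, α₁⟩ = -(2n - 2)`. -/
theorem typeB_rho_bullet_pairing (n : ℕ) (hn : 3 ≤ n) :
    (∀ j : ℕ, 2 ≤ j → j ≤ n → rhoBulletPairing n j = 1) ∧
      2 * rhoBulletPairing n 1 = -(2 * (n : ℚ) - 2) := by
  constructor
  · intro j h2 hjn
    unfold rhoBulletPairing
    rw [key n j hn]
    by_cases hA : j = n
    · rw [if_neg (by simp only [Finset.mem_Icc]; omega),
          if_neg (by simp only [Finset.mem_Icc]; omega),
          if_pos (by simp only [Finset.mem_Icc]; omega)]
      have hc : cartanB n n j = 2 := by unfold cartanB; split_ifs <;> omega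
      rw [hc]
      have h1 : ((j - 1 : ℕ) : ℚ) = (j : ℚ) - 1 := by
        rw [Nat.cast_sub (by omega)]; norm_num
      have h2 : (j : ℚ) = (n : ℚ) := by exact_mod_cast congrArg (Nat.cast : ℕ → ℚ) hA
      rw [h1, h2]; push_cast; ring
    · by_cases hB : j + 1 = n
      · rw [if_pos (by simp only [Finset.mem_Icc]; omega),
            if_neg (by simp only [Finset.mem_Icc]; omega)]
        have hc : cartanB n n j = -2 := by unfold cartanB; split_ifs <;> omega
        rw [hc]
        by_cases hj2 : j = 2
        · have hn3 : n = 3 := by omega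
          subst hj2; subst hn3
          rw [if_neg (by simp only [Finset.mem_Icc]; omega)]
          norm_num
        · rw [if_pos (by simp only [Finset.mem_Icc]; omega)]
          have h1 : ((j - 1 : ℕ) : ℚ) = (j : ℚ) - 1 := by
            rw [Nat.cast_sub (by omega)]; norm_num
          have h2 : (j : ℚ) = (n : ℚ) - 1 := by
            have : ((j : ℚ) + 1) = (n : ℚ) := by exact_mod_cast congrArg (Nat.cast : ℕ → ℚ) hB
            linarith
          rw [h1, h2]; push_cast; ring
      · -- j ≤ n - 2
        have hc : cartanB n n j = 0 := by unfold cartanB; split_ifs <;> omega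
        rw [hc]
        rw [if_pos (by simp only [Finset.mem_Icc]; omega),
            if_pos (by simp only [Finset.mem_Icc]; omega)]
        by_cases hj2 : j = 2
        · subst hj2
          rw [if_neg (by simp only [Finset.mem_Icc]; omega)]
          push_cast; ring
        · rw [if_pos (by simp only [Finset.mem_Icc]; omega)]
          have h1 : ((j - 1 : ℕ) : ℚ) = (j : ℚ) - 1 := by
            rw [Nat.cast_sub (by omega)]; norm_num
          rw [h1]; push_cast; ring
  · unfold rhoBulletPairing
    rw [key n 1 hn]
    rw [if_neg (by simp only [Finset.mem_Icc]; omega),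
        if_pos (by simp only [Finset.mem_Icc]; omega),
        if_neg (by simp only [Finset.mem_Icc]; omega)]
    have hc : cartanB n n 1 = 0 := by unfold cartanB; split_ifs <;> omega
    rw [hc]
    push_cast; ring
end

section
/- Let I be a finite set with a symmetric ℤ-valued form (i,j) ↦ i·j such that i·i is a positive even integer, and let F be the free ℚ(q)-algebra on (θ_i). Fix i ≠ j in I, set a = 2(i·j)/(i·i) (assumed to be a non-positive integer), q_i = q^{(i·i)/2}, and let S(θ_i, θ_j) = Σ_{s=0}^{1-a} (-1)ˢ · [1-a choose s]_{q_i} · θ_iˢ · θ_j · θ_i^{1-a-s} ∈ F, where [N choose s]_{q_i} is the balanced Gaussian binomial in the variable q_i. Then for every ℓ ∈ I, r_ℓ(S(θ_i, θ_j)) = 0, where r_ℓ is the twisted derivation with r_ℓ(1) = 0, r_ℓ(θ_k) = δ_{ℓk}, r_ℓ(xx') = x·r_ℓ(x') + q^{ℓ·μ'}·r_ℓ(x)·x' for x' homogeneous of degree μ'. -/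
noncomputable section

open scoped BigOperators

/-- The weight in `ℕ[I]` of a word in the alphabet `I`. -/
def wt {I : Type*} (l : List I) : I →₀ ℕ := (l.map fun i => Finsupp.single i 1).sum

/-- The homogeneous component of degree `μ ∈ ℕ[I]` of the free algebra on `(θ_i)`:
the span of the words of weight `μ`. -/
def homog (I : Type*) (μ : I →₀ ℕ) : Submodule (RatFunc ℚ) (FreeAlgebra (RatFunc ℚ) I) :=
  Submodule.span (RatFunc ℚ)
    {x | ∃ l : List I, wt l = μ ∧ x = (l.map (FreeAlgebra.ι (RatFunc ℚ))).prod}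

/-- The pairing `i·μ = Σ_j μ_j (i·j)` of `i ∈ I` with `μ ∈ ℕ[I]`. -/
def pairing {I : Type*} (d : I → I → ℤ) (i : I) (μ : I →₀ ℕ) : ℤ :=
  μ.sum fun j n => (n : ℤ) * d i j

/-- The quantum integer `[k]_t = (tᵏ - t⁻ᵏ)/(t - t⁻¹)`. -/
def qintAt (t : RatFunc ℚ) (k : ℕ) : RatFunc ℚ := (t ^ k - t⁻¹ ^ k) / (t - t⁻¹)

/-- The quantum factorial `[m]_t! = ∏_{j=1}^m [j]_t`. -/
def qfactAt (t : RatFunc ℚ) (m : ℕ) : RatFunc ℚ := ∏ l ∈ Finset.range m, qintAt t (l + 1)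

/-- The balanced Gaussian binomial `[m choose s]_t`. -/
def qbinomAt (t : RatFunc ℚ) (m s : ℕ) : RatFunc ℚ :=
  qfactAt t m / (qfactAt t s * qfactAt t (m - s))

/-!
For `ℓ ∉ {i, j}` every word of `S(θ_i, θ_j)` is killed by `r_ℓ`. For `ℓ = j` each word
`θ_iˢ θ_j θ_i^(n-s)` goes to a power of `q` times `θ_iⁿ`, and the total coefficient is, up to a
power of `q`, the alternating sum `A_n = Σ_s (-1)ˢ [n choose s]_t t^(s(n-1))` with `t = q_i`; the
`q`-Pascal rule gives `A_(n+1) = (1 - t^(2n)) A_n`, so `A_n = 0` for `n ≥ 1`. For `ℓ = i` one has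
`r_i(θ_i^(m+1)) = t^m [m+1]_t θ_i^m`, and the two contributions to each word
`θ_iˢ θ_j θ_i^(n-s-1)` cancel because `[n choose s]_t [n-s]_t = [n choose s+1]_t [s+1]_t`.
-/

open Finset

lemma pow_ne_one_of_not_isOfFinOrder {G : Type*} [Monoid G] {x : G} (hx : ¬IsOfFinOrder x)
    {m : ℕ} (hm : 0 < m) : x ^ m ≠ 1 :=
  fun h => hx (isOfFinOrder_iff_pow_eq_one.2 ⟨m, hm, h⟩)

lemma pow_sub_inv_pow_ne_zero {K : Type*} [Field K] {x : K} (hx0 : x ≠ 0)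
    (hx : ¬IsOfFinOrder x) {k : ℕ} (hk : 0 < k) : x ^ k - x⁻¹ ^ k ≠ 0 := by
  rw [sub_ne_zero, inv_pow]
  intro h
  apply pow_ne_one_of_not_isOfFinOrder hx (m := 2 * k) (by omega)
  rw [two_mul, pow_add]
  nth_rewrite 2 [h]
  exact mul_inv_cancel₀ (pow_ne_zero _ hx0)

lemma zpow_natCast_mul_natCast {G : Type*} [DivisionMonoid G] (x : G) (k e : ℕ) :
    x ^ ((k : ℤ) * e) = (x ^ e) ^ k := by
  rw [← zpow_natCast, ← zpow_natCast, ← zpow_mul, mul_comm]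

lemma RatFunc.not_isOfFinOrder_X_pow {K : Type*} [Field K] {e : ℕ} (he : 0 < e) :
    ¬IsOfFinOrder ((RatFunc.X : RatFunc K) ^ e) := by
  rw [isOfFinOrder_iff_pow_eq_one]
  rintro ⟨m, hm, h⟩
  have hdeg := congrArg RatFunc.intDegree h
  rw [← pow_mul, ← RatFunc.algebraMap_X, ← map_pow, RatFunc.intDegree_polynomial,
    Polynomial.natDegree_X_pow, RatFunc.intDegree_one] at hdeg
  exact (Nat.mul_pos he hm).ne' (by exact_mod_cast hdeg)

section QBinomial

variable {t : RatFunc ℚ}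

lemma qintAt_add (a b : ℕ) :
    qintAt t (a + b) = t⁻¹ ^ a * qintAt t b + t ^ b * qintAt t a := by
  unfold qintAt
  rw [← mul_div_assoc, ← mul_div_assoc, ← add_div]
  congr 1
  field_simp
  ring

lemma qintAt_ne_zero (ht0 : t ≠ 0) (ht : ¬IsOfFinOrder t) {k : ℕ} (hk : 0 < k) :
    qintAt t k ≠ 0 :=
  div_ne_zero (pow_sub_inv_pow_ne_zero ht0 ht hk)
    (by simpa using pow_sub_inv_pow_ne_zero ht0 ht one_pos)

lemma qfactAt_zero : qfactAt t 0 = 1 :=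
  prod_range_zero _

lemma qfactAt_succ (m : ℕ) : qfactAt t (m + 1) = qfactAt t m * qintAt t (m + 1) :=
  prod_range_succ _ _

lemma qfactAt_ne_zero (ht0 : t ≠ 0) (ht : ¬IsOfFinOrder t) (m : ℕ) : qfactAt t m ≠ 0 :=
  prod_ne_zero_iff.2 fun _ _ => qintAt_ne_zero ht0 ht (Nat.succ_pos _)

lemma qbinomAt_zero_right (ht0 : t ≠ 0) (ht : ¬IsOfFinOrder t) (m : ℕ) : qbinomAt t m 0 = 1 := by
  rw [qbinomAt, Nat.sub_zero, qfactAt_zero, one_mul,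
    div_self (qfactAt_ne_zero ht0 ht m)]

lemma qbinomAt_self (ht0 : t ≠ 0) (ht : ¬IsOfFinOrder t) (m : ℕ) : qbinomAt t m m = 1 := by
  rw [qbinomAt, Nat.sub_self, qfactAt_zero, mul_one,
    div_self (qfactAt_ne_zero ht0 ht m)]

lemma qbinomAt_mul_qintAt_sub (ht0 : t ≠ 0) (ht : ¬IsOfFinOrder t) {n k : ℕ} (hk : k < n) :
    qbinomAt t n k * qintAt t (n - k) = qbinomAt t n (k + 1) * qintAt t (k + 1) := by
  obtain ⟨u, rfl⟩ : ∃ u, n = k + 1 + u := ⟨n - (k + 1), by omega⟩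
  unfold qbinomAt
  rw [show k + 1 + u - k = u + 1 by omega, show k + 1 + u - (k + 1) = u by omega]
  have := qfactAt_ne_zero ht0 ht
  have := qintAt_ne_zero ht0 ht (Nat.succ_pos u)
  have := qintAt_ne_zero ht0 ht (Nat.succ_pos k)
  simp only [qfactAt_succ]
  field_simp

lemma qbinomAt_succ_succ (ht0 : t ≠ 0) (ht : ¬IsOfFinOrder t) {n s : ℕ} (hs : s < n) :
    qbinomAt t (n + 1) (s + 1) =
      t⁻¹ ^ (s + 1) * qbinomAt t n (s + 1) + t ^ (n - s) * qbinomAt t n s := by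
  obtain ⟨u, rfl⟩ : ∃ u, n = s + 1 + u := ⟨n - (s + 1), by omega⟩
  unfold qbinomAt
  rw [show s + 1 + u + 1 - (s + 1) = u + 1 by omega, show s + 1 + u - (s + 1) = u by omega,
    show s + 1 + u - s = u + 1 by omega]
  have := qfactAt_ne_zero ht0 ht
  have := qintAt_ne_zero ht0 ht (Nat.succ_pos u)
  have := qintAt_ne_zero ht0 ht (Nat.succ_pos s)
  rw [qfactAt_succ (s + 1 + u), qfactAt_succ s, qfactAt_succ u,
    show s + 1 + u + 1 = (s + 1) + (u + 1) by omega, qintAt_add (s + 1) (u + 1)]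
  field_simp

lemma sum_range_alternating_qbinomAt (ht0 : t ≠ 0) (ht : ¬IsOfFinOrder t) (N : ℕ) :
    ∑ s ∈ range (N + 2), (-1) ^ s * qbinomAt t (N + 1) s * t ^ (s * N) = 0 := by
  induction N with
  | zero => simp [sum_range_succ, qbinomAt_zero_right ht0 ht, qbinomAt_self ht0 ht]
  | succ N ih =>
    set c : ℕ → RatFunc ℚ := fun s => (-1) ^ s * qbinomAt t (N + 1) s * t ^ (s * N) with hc
    have hpascal : ∀ s ∈ range (N + 1), (-1) ^ (s + 1) * qbinomAt t (N + 1 + 1) (s + 1) *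
        t ^ ((s + 1) * (N + 1)) = c (s + 1) - t ^ (2 * (N + 1)) * c s := by
      intro s hs
      rw [qbinomAt_succ_succ ht0 ht (mem_range.1 hs)]
      obtain ⟨u, rfl⟩ : ∃ u, N = s + u := ⟨N - s, by have := mem_range.1 hs; omega⟩
      rw [show s + u + 1 - s = u + 1 by omega]
      have hinv : t ^ ((s + 1) * (s + u + 1)) * t⁻¹ ^ (s + 1) = t ^ ((s + 1) * (s + u)) := by
        rw [show (s + 1) * (s + u + 1) = (s + 1) * (s + u) + (s + 1) by ring, pow_add, mul_assoc,
          ← mul_pow, mul_inv_cancel₀ ht0, one_pow, mul_one]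
      simp only [hc]
      linear_combination (-1) ^ (s + 1) * qbinomAt t (s + u + 1) (s + 1) * hinv
    have hc0 : c 0 = 1 := by simp [hc, qbinomAt_zero_right ht0 ht]
    have hcN : c (N + 1) = (-1) ^ (N + 1) * t ^ ((N + 1) * N) := by simp [hc, qbinomAt_self ht0 ht]
    have h0 := (sum_range_succ' c (N + 1)).symm.trans ih
    have hN := (sum_range_succ c (N + 1)).symm.trans ih
    rw [hc0] at h0
    rw [hcN] at hN
    rw [sum_range_succ', sum_range_succ, sum_congr rfl hpascal, sum_sub_distrib, ← mul_sum,
      qbinomAt_zero_right ht0 ht, qbinomAt_self ht0 ht]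
    linear_combination h0 - t ^ (2 * (N + 1)) * hN

lemma sum_range_pow_two_mul_eq_pow_mul_qintAt (ht0 : t ≠ 0) (ht : ¬IsOfFinOrder t) (m : ℕ) :
    ∑ u ∈ range (m + 1), t ^ (2 * u) = t ^ m * qintAt t (m + 1) := by
  have ht2 : t ^ 2 ≠ 1 := pow_ne_one_of_not_isOfFinOrder ht two_pos
  have h1 : t - t⁻¹ ≠ 0 := by simpa using pow_sub_inv_pow_ne_zero ht0 ht one_pos
  simp only [pow_mul]
  rw [geom_sum_eq ht2, qintAt, div_eq_iff (sub_ne_zero.2 ht2)]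
  have hinv : (t * t⁻¹) ^ (m + 1) = 1 := by rw [mul_inv_cancel₀ ht0, one_pow]
  field_simp
  linear_combination hinv

end QBinomial

section Homogeneous

variable {I : Type*}

lemma wt_append (l l' : List I) : wt (l ++ l') = wt l + wt l' := by
  simp [wt]

lemma list_prod_mem_homog (l : List I) :
    (l.map (FreeAlgebra.ι (RatFunc ℚ))).prod ∈ homog I (wt l) :=
  Submodule.subset_span ⟨l, rfl, rfl⟩

lemma mul_mem_homog {μ ν : I →₀ ℕ} {x y : FreeAlgebra (RatFunc ℚ) I} (hx : x ∈ homog I μ)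
    (hy : y ∈ homog I ν) : x * y ∈ homog I (μ + ν) := by
  have hle : homog I μ * homog I ν ≤ homog I (μ + ν) := by
    rw [homog, homog, Submodule.span_mul_span, Submodule.span_le]
    rintro _ ⟨_, ⟨l, rfl, rfl⟩, _, ⟨l', rfl, rfl⟩, rfl⟩
    exact Submodule.subset_span ⟨l ++ l', wt_append l l', by simp⟩
  exact hle (Submodule.mul_mem_mul hx hy)

lemma ι_mem_homog (k : I) : FreeAlgebra.ι (RatFunc ℚ) k ∈ homog I (Finsupp.single k 1) := by
  simpa [wt] using list_prod_mem_homog [k]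

lemma ι_pow_mem_homog (k : I) (m : ℕ) :
    FreeAlgebra.ι (RatFunc ℚ) k ^ m ∈ homog I (Finsupp.single k m) := by
  induction m with
  | zero => simpa [wt] using list_prod_mem_homog ([] : List I)
  | succ m ih =>
    rw [pow_succ', add_comm, Finsupp.single_add]
    exact mul_mem_homog (ι_mem_homog k) ih

lemma pairing_single (d : I → I → ℤ) (ℓ k : I) (m : ℕ) :
    pairing d ℓ (Finsupp.single k m) = m * d ℓ k := by
  simp [pairing]

lemma pairing_add (d : I → I → ℤ) (ℓ : I) (μ ν : I →₀ ℕ) :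
    pairing d ℓ (μ + ν) = pairing d ℓ μ + pairing d ℓ ν := by
  rw [pairing, pairing, pairing, Finsupp.sum_add_index'] <;> intros <;> push_cast <;> ring

end Homogeneous

local notation "θ" => FreeAlgebra.ι (RatFunc ℚ)

local notation "q" => (RatFunc.X : RatFunc ℚ)

section TwistedDerivation

variable {I : Type*} [DecidableEq I]

structure IsTwistedDerivation (d : I → I → ℤ) (ℓ : I)
    (r : FreeAlgebra (RatFunc ℚ) I →ₗ[RatFunc ℚ] FreeAlgebra (RatFunc ℚ) I) : Prop where
  map_one : r 1 = 0
  map_ι (k : I) : r (θ k) = if k = ℓ then 1 else 0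
  map_mul {μ μ' : I →₀ ℕ} {x x' : FreeAlgebra (RatFunc ℚ) I} :
    x ∈ homog I μ → x' ∈ homog I μ' → r (x * x') = x * r x' + (q ^ pairing d ℓ μ') • (r x * x')

def serreSum (c : ℕ → RatFunc ℚ) (i j : I) (n : ℕ) : FreeAlgebra (RatFunc ℚ) I :=
  ∑ s ∈ range (n + 1), c s • (θ i ^ s * θ j * θ i ^ (n - s))

namespace IsTwistedDerivation

variable {d : I → I → ℤ} {ℓ : I}
  {r : FreeAlgebra (RatFunc ℚ) I →ₗ[RatFunc ℚ] FreeAlgebra (RatFunc ℚ) I}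

theorem map_ι_pow_of_ne (hr : IsTwistedDerivation d ℓ r) {k : I} (hk : k ≠ ℓ) (m : ℕ) :
    r (θ k ^ m) = 0 := by
  induction m with
  | zero => rw [pow_zero, hr.map_one]
  | succ m ih =>
    rw [pow_succ', hr.map_mul (ι_mem_homog k) (ι_pow_mem_homog k m), ih, hr.map_ι, if_neg hk,
      mul_zero, zero_mul, smul_zero, add_zero]

theorem map_ι_pow_succ_self (hr : IsTwistedDerivation d ℓ r) (m : ℕ) :
    r (θ ℓ ^ (m + 1)) = (∑ u ∈ range (m + 1), q ^ ((u : ℤ) * d ℓ ℓ)) • θ ℓ ^ m := by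
  induction m with
  | zero => simp [hr.map_ι]
  | succ m ih =>
    rw [pow_succ', hr.map_mul (ι_mem_homog ℓ) (ι_pow_mem_homog ℓ (m + 1)), ih, hr.map_ι, if_pos rfl,
      one_mul, pairing_single, mul_smul_comm, ← pow_succ', sum_range_succ _ (m + 1), add_smul]

theorem map_mul_mul (hr : IsTwistedDerivation d ℓ r) {μ ν ρ : I →₀ ℕ}
    {x y z : FreeAlgebra (RatFunc ℚ) I} (hx : x ∈ homog I μ) (hy : y ∈ homog I ν)
    (hz : z ∈ homog I ρ) :
    r (x * y * z) = x * y * r z + (q ^ pairing d ℓ ρ) • (x * r y * z) +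
      (q ^ pairing d ℓ (ν + ρ)) • (r x * y * z) := by
  rw [hr.map_mul (mul_mem_homog hx hy) hz, hr.map_mul hx hy, add_mul, smul_add, smul_mul_assoc,
    smul_smul, ← zpow_add₀ RatFunc.X_ne_zero, pairing_add, add_comm (pairing d ℓ ρ), add_assoc]

theorem map_serreSum_of_ne (hr : IsTwistedDerivation d ℓ r) {i j : I} (hi : i ≠ ℓ) (hj : j ≠ ℓ)
    (c : ℕ → RatFunc ℚ) (n : ℕ) : r (serreSum c i j n) = 0 := by
  simp only [serreSum, map_sum, map_smul]
  refine sum_eq_zero fun s _ => ?_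
  rw [hr.map_mul_mul (ι_pow_mem_homog i s) (ι_mem_homog j) (ι_pow_mem_homog i (n - s)),
    hr.map_ι_pow_of_ne hi, hr.map_ι_pow_of_ne hi, hr.map_ι, if_neg hj]
  simp

theorem map_serreSum_right (hr : IsTwistedDerivation d ℓ r) {i : I} (hi : i ≠ ℓ)
    (c : ℕ → RatFunc ℚ) (n : ℕ) :
    r (serreSum c i ℓ n) =
      (∑ s ∈ range (n + 1), c s * q ^ (((n - s : ℕ) : ℤ) * d ℓ i)) • θ i ^ n := by
  simp only [serreSum, map_sum, map_smul, sum_smul]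
  refine sum_congr rfl fun s hs => ?_
  rw [hr.map_mul_mul (ι_pow_mem_homog i s) (ι_mem_homog ℓ) (ι_pow_mem_homog i (n - s)),
    hr.map_ι_pow_of_ne hi, hr.map_ι_pow_of_ne hi, hr.map_ι, if_pos rfl, pairing_single, mul_one,
    ← pow_add, Nat.add_sub_cancel' (Nat.lt_succ_iff.1 (mem_range.1 hs)), mul_smul]
  simp

theorem map_serreSum_left (hr : IsTwistedDerivation d ℓ r) {j : I} (hj : j ≠ ℓ)
    (c : ℕ → RatFunc ℚ) (n : ℕ) :
    r (serreSum c ℓ j n) = ∑ s ∈ range n,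
      (c s * ∑ u ∈ range (n - s - 1 + 1), q ^ ((u : ℤ) * d ℓ ℓ) +
        c (s + 1) * q ^ (d ℓ j + ((n - s - 1 : ℕ) : ℤ) * d ℓ ℓ) *
          ∑ u ∈ range (s + 1), q ^ ((u : ℤ) * d ℓ ℓ)) •
        (θ ℓ ^ s * θ j * θ ℓ ^ (n - s - 1)) := by
  have hword (s : ℕ) := hr.map_mul_mul (ι_pow_mem_homog ℓ s) (ι_mem_homog j)
    (ι_pow_mem_homog ℓ (n - s))
  simp only [serreSum, map_sum, map_smul, hword, hr.map_ι, if_neg hj, mul_zero, zero_mul,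
    smul_zero, add_zero, smul_add, sum_add_distrib]
  -- the terms with `r (θ ℓ ^ 0) = r 1 = 0` drop out, after which both sums run over the same words
  rw [sum_range_succ, sum_range_succ']
  simp only [Nat.sub_self, pow_zero, hr.map_one, mul_zero, zero_mul, smul_zero, add_zero]
  rw [← sum_add_distrib]
  refine sum_congr rfl fun s hs => ?_
  have hpow : r (θ ℓ ^ (n - s)) =
      (∑ u ∈ range (n - s - 1 + 1), q ^ ((u : ℤ) * d ℓ ℓ)) • θ ℓ ^ (n - s - 1) := by
    rw [← hr.map_ι_pow_succ_self, Nat.sub_add_cancel (Nat.sub_pos_of_lt (mem_range.1 hs))]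
  rw [hpow, hr.map_ι_pow_succ_self, Nat.sub_sub, pairing_add, pairing_single, pairing_single,
    Nat.cast_one, one_mul]
  simp only [mul_smul_comm, smul_mul_assoc, smul_smul, add_smul, mul_assoc]

end IsTwistedDerivation

end TwistedDerivation

section SerreCoefficients

variable {e : ℕ}

lemma serre_coeff_left_eq_zero (he : 0 < e) {n s : ℕ} (hs : s < n) :
    (-1) ^ s * qbinomAt (q ^ e) n s * ∑ u ∈ range (n - s - 1 + 1), q ^ ((u : ℤ) * (2 * e)) +
      (-1) ^ (s + 1) * qbinomAt (q ^ e) n (s + 1) *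
        q ^ ((1 - n : ℤ) * e + ((n - s - 1 : ℕ) : ℤ) * (2 * e)) *
          ∑ u ∈ range (s + 1), q ^ ((u : ℤ) * (2 * e)) = 0 := by
  set t := q ^ e
  have ht0 : t ≠ 0 := pow_ne_zero e RatFunc.X_ne_zero
  have ht := RatFunc.not_isOfFinOrder_X_pow (K := ℚ) he
  have hgeom (m : ℕ) : ∑ u ∈ range (m + 1), q ^ ((u : ℤ) * (2 * e)) = t ^ m * qintAt t (m + 1) := by
    rw [← sum_range_pow_two_mul_eq_pow_mul_qintAt ht0 ht]
    refine sum_congr rfl fun u _ => ?_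
    rw [← zpow_natCast_mul_natCast]
    push_cast
    ring_nf
  have hexp :
      q ^ ((1 - n : ℤ) * e + ((n - s - 1 : ℕ) : ℤ) * (2 * e)) * t ^ s = t ^ (n - s - 1) := by
    rw [← zpow_natCast_mul_natCast, ← zpow_natCast_mul_natCast, ← zpow_add₀ RatFunc.X_ne_zero]
    push_cast [Nat.sub_sub, Nat.cast_sub (Nat.succ_le_of_lt hs)]
    ring_nf
  rw [hgeom, hgeom, Nat.sub_add_cancel (Nat.sub_pos_of_lt hs)]
  linear_combination (-1) ^ s * t ^ (n - s - 1) * qbinomAt_mul_qintAt_sub ht0 ht hs +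
    (-1) ^ (s + 1) * qbinomAt t n (s + 1) * qintAt t (s + 1) * hexp

lemma sum_serre_coeff_right_eq_zero (he : 0 < e) {n : ℕ} (hn : 0 < n) :
    ∑ s ∈ range (n + 1),
      (-1) ^ s * qbinomAt (q ^ e) n s * q ^ (((n - s : ℕ) : ℤ) * ((1 - n) * e)) = 0 := by
  set t := q ^ e
  obtain ⟨N, rfl⟩ : ∃ N, n = N + 1 := ⟨n - 1, by omega⟩
  have hexp (s : ℕ) (hs : s ≤ N + 1) : q ^ (((N + 1 - s : ℕ) : ℤ) * ((1 - (N + 1 : ℕ)) * e)) =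
      q ^ (-((N + 1) * N * e : ℕ) : ℤ) * t ^ (s * N) := by
    rw [← zpow_natCast_mul_natCast, ← zpow_add₀ RatFunc.X_ne_zero]
    push_cast [Nat.cast_sub hs]
    ring_nf
  rw [sum_congr rfl fun s hs => by rw [hexp s (Nat.lt_succ_iff.1 (mem_range.1 hs)), mul_left_comm],
    ← mul_sum, sum_range_alternating_qbinomAt (pow_ne_zero e RatFunc.X_ne_zero)
      (RatFunc.not_isOfFinOrder_X_pow he), mul_zero]

end SerreCoefficients

theorem twisted_derivation_annihilates_serre_general (I : Type*) [DecidableEq I]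
    (d : I → I → ℤ) (hsymm : ∀ i j : I, d i j = d j i)
    (i j : I) (hij : i ≠ j)
    (e : ℕ) (he : 0 < e) (hii : d i i = 2 * (e : ℤ))
    (a : ℤ) (ha : a ≤ 0) (haij : 2 * d i j = a * d i i)
    (n : ℕ) (hn : (n : ℤ) = 1 - a)
    (ℓ : I)
    (r : FreeAlgebra (RatFunc ℚ) I →ₗ[RatFunc ℚ] FreeAlgebra (RatFunc ℚ) I)
    (hr1 : r 1 = 0)
    (hrθ : ∀ k : I, r (FreeAlgebra.ι (RatFunc ℚ) k) = if k = ℓ then 1 else 0)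
    (hrL : ∀ (μ μ' : I →₀ ℕ) (x x' : FreeAlgebra (RatFunc ℚ) I),
      x ∈ homog I μ → x' ∈ homog I μ' →
      r (x * x') =
        x * r x' + ((RatFunc.X : RatFunc ℚ) ^ pairing d ℓ μ') • (r x * x')) :
    r (∑ s ∈ Finset.range (n + 1),
        (((-1 : RatFunc ℚ)) ^ s * qbinomAt ((RatFunc.X : RatFunc ℚ) ^ e) n s) •
          (FreeAlgebra.ι (RatFunc ℚ) i ^ s * FreeAlgebra.ι (RatFunc ℚ) j *
            FreeAlgebra.ι (RatFunc ℚ) i ^ (n - s))) = 0 := by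
  have hr : IsTwistedDerivation d ℓ r := ⟨hr1, hrθ, hrL _ _ _ _⟩
  have hdij : d i j = (1 - n) * e := by
    rw [hii] at haij
    rw [hn]
    linarith
  change r (serreSum (fun s => (-1) ^ s * qbinomAt (q ^ e) n s) i j n) = 0
  by_cases hi : i = ℓ
  · subst hi
    rw [hr.map_serreSum_left hij.symm]
    refine sum_eq_zero fun s hs => ?_
    rw [hii, hdij, serre_coeff_left_eq_zero he (mem_range.1 hs), zero_smul]
  by_cases hj : j = ℓ
  · subst hj
    rw [hr.map_serreSum_right hi, hsymm j i, hdij, sum_serre_coeff_right_eq_zero he (by omega),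
      zero_smul]
  exact hr.map_serreSum_of_ne hi hj _ n

/-- The twisted derivations `r_ℓ` annihilate the quantum Serre relator
`S(θ_i, θ_j) = Σ_{s=0}^{1-a} (-1)ˢ [1-a choose s]_{q_i} θ_iˢ θ_j θ_i^{1-a-s}`. -/
theorem twisted_derivation_annihilates_serre (I : Type*) [Fintype I] [DecidableEq I]
    (d : I → I → ℤ) (hsymm : ∀ i j : I, d i j = d j i)
    (i j : I) (hij : i ≠ j)
    (e : ℕ) (he : 0 < e) (hii : d i i = 2 * (e : ℤ))
    (a : ℤ) (ha : a ≤ 0) (haij : 2 * d i j = a * d i i)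
    (n : ℕ) (hn : (n : ℤ) = 1 - a)
    (ℓ : I)
    (r : FreeAlgebra (RatFunc ℚ) I →ₗ[RatFunc ℚ] FreeAlgebra (RatFunc ℚ) I)
    (hr1 : r 1 = 0)
    (hrθ : ∀ k : I, r (FreeAlgebra.ι (RatFunc ℚ) k) = if k = ℓ then 1 else 0)
    (hrL : ∀ (μ μ' : I →₀ ℕ) (x x' : FreeAlgebra (RatFunc ℚ) I),
      x ∈ homog I μ → x' ∈ homog I μ' →
      r (x * x') =
        x * r x' + ((RatFunc.X : RatFunc ℚ) ^ pairing d ℓ μ') • (r x * x')) :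
    r (∑ s ∈ Finset.range (n + 1),
        (((-1 : RatFunc ℚ)) ^ s * qbinomAt ((RatFunc.X : RatFunc ℚ) ^ e) n s) •
          (FreeAlgebra.ι (RatFunc ℚ) i ^ s * FreeAlgebra.ι (RatFunc ℚ) j *
            FreeAlgebra.ι (RatFunc ℚ) i ^ (n - s))) = 0 :=
  twisted_derivation_annihilates_serre_general I d hsymm i j hij e he hii a ha haij n hn ℓ r hr1 hrθ
    hrL
end
end
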